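/- Fix x ∈ S^{n−1} and t ≥ 1. For 1 ≤ i ≤ j ≤ n define B_{ij}(x) = ⟨x, A_{ij}(t)x⟩ E_{ij} − (E_{ij}x)(E_{ij}x)ᵀ − t x(E_{ij}x)ᵀ − t(E_{ij}x)xᵀ − t² xxᵀ + t⟨x, A_{ij}(t)x⟩ xxᵀ, where A_{ij}(t) = t·Id + E_{ij}. If C is a symmetric matrix with Cx = 0 and tr(C B_{i₀j₀}(x)) = 0 where ‖C‖_* = tr(C E_{i₀j₀}), then whenever t > 1 + 1/c (with c the equivalence constant satisfying c‖C‖ ≤ ‖C‖_* and ‖E_{ij}‖ ≤ 1), it follows that C = 0. -/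

import Mathlib

/-!
Since `C` is symmetric with `C x = 0`, every rank-one term of `B_{i₀j₀}(x)` with a factor `x`
vanishes against `C` under the trace, leaving `0 = ⟨x, A x⟩ tr(C E) − ⟨E x, C E x⟩`.
As `‖x‖ = 1` and `‖E‖ ≤ 1`, we have `⟨x, A x⟩ ≥ t − 1` and `⟨E x, C E x⟩ ≤ ‖C‖`, so
`c (t − 1) ‖C‖ ≤ ‖C‖` with `c (t − 1) > 1`, which forces `‖C‖ = 0`.
-/

open Matrix

/-- `E i j` is the symmetric matrix of the quadratic form `x ↦ x_i x_j − δ_{ij} x_i x_j`. -/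
noncomputable def Esym (n : ℕ) (i j : Fin n) : Matrix (Fin n) (Fin n) ℝ :=
  if i = j then 0 else
    (1 / 2 : ℝ) • (Matrix.single i j 1 + Matrix.single j i 1)

/-- `B_{ij}(x) = ⟨x,A_{ij}(t)x⟩E_{ij} − (E_{ij}x)(E_{ij}x)ᵀ − t·x(E_{ij}x)ᵀ − t·(E_{ij}x)xᵀ
− t²xxᵀ + t⟨x,A_{ij}(t)x⟩xxᵀ`, with `A_{ij}(t) = t·Id + E_{ij}`. -/
noncomputable def Bmat (n : ℕ) (t : ℝ) (i j : Fin n) (x : Fin n → ℝ) :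
    Matrix (Fin n) (Fin n) ℝ :=
  let E := Esym n i j
  let q := x ⬝ᵥ (t • (1 : Matrix (Fin n) (Fin n) ℝ) + E).mulVec x
  q • E - Matrix.vecMulVec (E.mulVec x) (E.mulVec x)
    - t • Matrix.vecMulVec x (E.mulVec x) - t • Matrix.vecMulVec (E.mulVec x) x
    - t ^ 2 • Matrix.vecMulVec x x + (t * q) • Matrix.vecMulVec x x

namespace Matrix

variable {ι : Type*} [Fintype ι]

theorem dotProduct_self_eq_norm_toLp_sq (u : ι → ℝ) :
    u ⬝ᵥ u = ‖(WithLp.toLp 2 u : EuclideanSpace ℝ ι)‖ ^ 2 := by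
  rw [← real_inner_self_eq_norm_sq, EuclideanSpace.inner_toLp_toLp, star_trivial]

variable [DecidableEq ι]

theorem abs_dotProduct_mulVec_le (A : Matrix ι ι ℝ) (u : ι → ℝ) :
    |u ⬝ᵥ A *ᵥ u| ≤ ‖toEuclideanCLM (𝕜 := ℝ) A‖ * (u ⬝ᵥ u) := by
  set v : EuclideanSpace ℝ ι := WithLp.toLp 2 u
  calc |u ⬝ᵥ A *ᵥ u| = |inner ℝ v (toEuclideanCLM (𝕜 := ℝ) A v)| := by
        rw [inner_toEuclideanCLM]
    _ ≤ ‖v‖ * ‖toEuclideanCLM (𝕜 := ℝ) A v‖ := abs_real_inner_le_norm _ _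
    _ ≤ ‖v‖ * (‖toEuclideanCLM (𝕜 := ℝ) A‖ * ‖v‖) := by
        gcongr; exact (toEuclideanCLM (𝕜 := ℝ) A).le_opNorm v
    _ = ‖toEuclideanCLM (𝕜 := ℝ) A‖ * (u ⬝ᵥ u) := by
        rw [dotProduct_self_eq_norm_toLp_sq]; ring

theorem mulVec_dotProduct_mulVec_self_le (A : Matrix ι ι ℝ) (u : ι → ℝ) :
    (A *ᵥ u) ⬝ᵥ (A *ᵥ u) ≤ ‖toEuclideanCLM (𝕜 := ℝ) A‖ ^ 2 * (u ⬝ᵥ u) := by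
  set v : EuclideanSpace ℝ ι := WithLp.toLp 2 u
  rw [dotProduct_self_eq_norm_toLp_sq, dotProduct_self_eq_norm_toLp_sq, ← mul_pow,
    ← toEuclideanCLM_toLp]
  gcongr
  exact (toEuclideanCLM (𝕜 := ℝ) A).le_opNorm v

theorem neg_opNorm_le_dotProduct_mulVec (A : Matrix ι ι ℝ) {u : ι → ℝ} (hu : u ⬝ᵥ u = 1) :
    -‖toEuclideanCLM (𝕜 := ℝ) A‖ ≤ u ⬝ᵥ A *ᵥ u :=
  neg_le_of_abs_le (by simpa [hu] using abs_dotProduct_mulVec_le A u)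

theorem mulVec_dotProduct_mulVec_self_le_one {A : Matrix ι ι ℝ} {u : ι → ℝ}
    (hA : ‖toEuclideanCLM (𝕜 := ℝ) A‖ ≤ 1) (hu : u ⬝ᵥ u = 1) :
    (A *ᵥ u) ⬝ᵥ (A *ᵥ u) ≤ 1 :=
  calc (A *ᵥ u) ⬝ᵥ (A *ᵥ u) ≤ ‖toEuclideanCLM (𝕜 := ℝ) A‖ ^ 2 * (u ⬝ᵥ u) :=
        mulVec_dotProduct_mulVec_self_le A u
    _ ≤ 1 := by rw [hu, mul_one]; exact pow_le_one₀ (norm_nonneg _) hA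

end Matrix

theorem trace_mul_Bmat_of_mulVec_eq_zero {n : ℕ} {t : ℝ} {i j : Fin n} {x : Fin n → ℝ}
    {C : Matrix (Fin n) (Fin n) ℝ} (hC : C.IsSymm) (hCx : C *ᵥ x = 0) :
    (C * Bmat n t i j x).trace =
      (x ⬝ᵥ (t • 1 + Esym n i j) *ᵥ x) * (C * Esym n i j).trace
        - (Esym n i j *ᵥ x) ⬝ᵥ C *ᵥ (Esym n i j *ᵥ x) := by
  have hCx' (u : Fin n → ℝ) : (C *ᵥ u) ⬝ᵥ x = 0 := by
    rw [dotProduct_comm, dotProduct_mulVec, ← mulVec_transpose, hC.eq, hCx, zero_dotProduct]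
  simp only [Bmat, mul_sub, mul_add, Matrix.mul_smul, trace_sub, trace_add, trace_smul,
    mul_vecMulVec, trace_vecMulVec, hCx, hCx', zero_dotProduct, smul_eq_mul]
  rw [dotProduct_comm (C *ᵥ _)]
  ring

theorem stmt6_general (n : ℕ) (x : Fin n → ℝ) (hx : x ⬝ᵥ x = 1) (t c : ℝ) (hc : 0 < c)
    (hE : ∀ i j : Fin n, ‖Matrix.toEuclideanCLM (𝕜 := ℝ) (Esym n i j)‖ ≤ 1)
    (ht : 1 + 1 / c < t)
    (C : Matrix (Fin n) (Fin n) ℝ) (hCsymm : C.IsSymm) (hCx : C.mulVec x = 0)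
    (i₀ j₀ : Fin n)
    (hcC : c * ‖Matrix.toEuclideanCLM (𝕜 := ℝ) C‖ ≤ (C * Esym n i₀ j₀).trace)
    (hB : (C * Bmat n t i₀ j₀ x).trace = 0) :
    C = 0 := by
  rw [trace_mul_Bmat_of_mulVec_eq_zero hCsymm hCx, sub_eq_zero] at hB
  set E := Esym n i₀ j₀
  set N := ‖toEuclideanCLM (𝕜 := ℝ) C‖
  have hq : t - 1 ≤ x ⬝ᵥ (t • 1 + E) *ᵥ x := by
    rw [add_mulVec, smul_mulVec, one_mulVec, dotProduct_add, dotProduct_smul, hx, smul_eq_mul]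
    linarith [neg_opNorm_le_dotProduct_mulVec E hx, hE i₀ j₀]
  have ht1 : 0 ≤ t - 1 := by linarith [one_div_pos.mpr hc]
  have hNN : c * (t - 1) * N ≤ N :=
    calc c * (t - 1) * N = (t - 1) * (c * N) := by ring
      _ ≤ (x ⬝ᵥ (t • 1 + E) *ᵥ x) * (C * E).trace :=
        mul_le_mul hq hcC (mul_nonneg hc.le (norm_nonneg _)) (ht1.trans hq)
      _ = (E *ᵥ x) ⬝ᵥ C *ᵥ (E *ᵥ x) := hB
      _ ≤ N * ((E *ᵥ x) ⬝ᵥ (E *ᵥ x)) :=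
        (le_abs_self _).trans (abs_dotProduct_mulVec_le C (E *ᵥ x))
      _ ≤ N := mul_le_of_le_one_right (norm_nonneg _)
        (mulVec_dotProduct_mulVec_self_le_one (hE i₀ j₀) hx)
  have hct : 1 < c * (t - 1) := by rw [← div_lt_iff₀' hc]; linarith
  have hN : N = 0 := by nlinarith [norm_nonneg (toEuclideanCLM (𝕜 := ℝ) C)]
  exact toEuclideanCLM.injective (by rw [map_zero]; exact norm_eq_zero.mp hN)

/-- If `C` is symmetric with `Cx = 0`, `‖C‖_* = tr(C E_{i₀j₀})` is attained at `(i₀,j₀)`,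
`c‖C‖ ≤ ‖C‖_*`, `‖E_{ij}‖ ≤ 1`, `t > 1 + 1/c`, and `tr(C B_{i₀j₀}(x)) = 0`, then `C = 0`. -/
theorem stmt6 (n : ℕ) (x : Fin n → ℝ) (hx : x ⬝ᵥ x = 1) (t c : ℝ) (hc : 0 < c)
    (hE : ∀ i j : Fin n, ‖Matrix.toEuclideanCLM (𝕜 := ℝ) (Esym n i j)‖ ≤ 1)
    (ht : 1 + 1 / c < t)
    (C : Matrix (Fin n) (Fin n) ℝ) (hCsymm : C.IsSymm) (hCx : C.mulVec x = 0)
    (i₀ j₀ : Fin n) (hij : i₀ ≤ j₀)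
    (hmax : ∀ i j : Fin n, i ≤ j → |(C * Esym n i j).trace| ≤ (C * Esym n i₀ j₀).trace)
    (hcC : c * ‖Matrix.toEuclideanCLM (𝕜 := ℝ) C‖ ≤ (C * Esym n i₀ j₀).trace)
    (hB : (C * Bmat n t i₀ j₀ x).trace = 0) :
    C = 0 :=
  stmt6_general n x hx t c hc hE ht C hCsymm hCx i₀ j₀ hcC hB
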